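/- arXiv:2403.16886 — 2 statements merged into one kernel-verified Lean document; each statement's English description precedes it below -/
import Mathlib

section
/- Let M, N, a_min be positive integers with M ≥ (N − 1)·a_min + 1 and let h : {1, …, M} → ℂ. Then the maximum of Σ_{n=1}^{N} |h_{a_n}|² over all selections a_1, …, a_N ∈ {1, …, M} with |a_i − a_j| ≥ a_min for all i ≠ j equals the negative of the minimum total weight over all paths in G̃ from vertex 0 to vertex M+1 consisting of exactly N+1 edges. That is, problem (P1) is equivalent to the fixed-hop shortest path problem (P2). -/
/-- Edge relation of the augmented graph `G̃` on vertices `{0, 1, …, M, M+1}`: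
`(i, j)` with `i, j ∈ {1, …, M}` and `j − i ≥ a_min`, plus `(0, j)` and `(j, M+1)`
for every `j ∈ {1, …, M}`. -/
def EdgeTilde (M a_min : ℕ) (i j : ℕ) : Prop :=
  (i ∈ Finset.Icc 1 M ∧ j ∈ Finset.Icc 1 M ∧ i + a_min ≤ j) ∨
  (i = 0 ∧ j ∈ Finset.Icc 1 M) ∨
  (i ∈ Finset.Icc 1 M ∧ j = M + 1)

/-- Edge weight in `G̃`: edges leaving the dummy source 0 have weight 0, every other
edge `(i, j)` has weight `−|h_i|²`. -/
noncomputable def Wtilde (h : ℕ → ℂ) (i j : ℕ) : ℝ :=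
  if i = 0 then 0 else -(‖h i‖) ^ 2

lemma sel_to_path (M N a_min : ℕ) (hN : 0 < N) (ha : 0 < a_min) (h : ℕ → ℂ) (s : ℝ)
    (hsel : ∃ a : Fin N → ℕ, (∀ n, a n ∈ Finset.Icc 1 M) ∧
        (∀ i j, i ≠ j → (a_min : ℤ) ≤ |(a i : ℤ) - (a j : ℤ)|) ∧
        s = ∑ n, ‖h (a n)‖ ^ 2) :
    ∃ p : ℕ → ℕ, p 0 = 0 ∧ p (N + 1) = M + 1 ∧
        (∀ k < N + 1, EdgeTilde M a_min (p k) (p (k + 1))) ∧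
        -s = ∑ k ∈ Finset.range (N + 1), Wtilde h (p k) (p (k + 1)) := by
  obtain ⟨a, hmem, hsep, hs⟩ := hsel
  have hinj : Function.Injective a := by
    intro i j hij
    by_contra hne
    have h1 := hsep i j hne
    rw [hij, sub_self, abs_zero] at h1
    exact absurd h1 (by exact_mod_cast Nat.not_le.mpr ha)
  set sfin : Finset ℕ := Finset.image a Finset.univ with hsfin
  have hcard : sfin.card = N := by
    rw [hsfin, Finset.card_image_of_injective _ hinj, Finset.card_univ, Fintype.card_fin]
  set b : Fin N → ℕ := fun k => (sfin.orderIsoOfFin hcard k : ℕ) with hb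
  have hbmono : StrictMono b := fun i j hij => by
    exact_mod_cast (sfin.orderIsoOfFin hcard).strictMono hij
  have hbmem : ∀ k, b k ∈ sfin := fun k => (sfin.orderIsoOfFin hcard k).2
  have hbIcc : ∀ k, b k ∈ Finset.Icc 1 M := by
    intro k
    obtain ⟨n, -, hn⟩ := Finset.mem_image.mp (hbmem k)
    exact hn ▸ hmem n
  have hgap : ∀ i j : Fin N, i < j → b i + a_min ≤ b j := by
    intro i j hij
    obtain ⟨ni, -, hni⟩ := Finset.mem_image.mp (hbmem i)
    obtain ⟨nj, -, hnj⟩ := Finset.mem_image.mp (hbmem j)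
    have hlt : b i < b j := hbmono hij
    have hne : ni ≠ nj := by
      intro e; rw [e, hnj] at hni; omega
    have h2 := hsep ni nj hne
    rw [hni, hnj] at h2
    rcases abs_cases ((b i : ℤ) - (b j : ℤ)) with ⟨he, -⟩ | ⟨he, -⟩ <;> rw [he] at h2 <;> omega
  -- extend b to ℕ
  set b' : ℕ → ℕ := fun k => if hk : k < N then b ⟨k, hk⟩ else 0 with hb'
  have hb'val : ∀ k (hk : k < N), b' k = b ⟨k, hk⟩ := by
    intro k hk; simp [hb', dif_pos hk]
  have hb'Icc : ∀ k, k < N → b' k ∈ Finset.Icc 1 M := by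
    intro k hk; rw [hb'val k hk]; exact hbIcc _
  have hb'gap : ∀ k, k + 1 < N → b' k + a_min ≤ b' (k + 1) := by
    intro k hk
    rw [hb'val k (by omega), hb'val (k + 1) hk]
    exact hgap _ _ (by simp [Fin.lt_def])
  -- sum over b' equals sum over a
  have hsum : ∑ k ∈ Finset.range N, ‖h (b' k)‖ ^ 2
      = ∑ n, ‖h (a n)‖ ^ 2 := by
    have e1 : ∑ k ∈ Finset.range N, ‖h (b' k)‖ ^ 2
        = ∑ k : Fin N, ‖h (b k)‖ ^ 2 := by
      rw [← Fin.sum_univ_eq_sum_range]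
      exact Finset.sum_congr rfl fun k _ => by rw [hb'val k.val k.isLt]
    have e2 : ∑ k : Fin N, ‖h (b k)‖ ^ 2
        = ∑ x ∈ sfin, ‖h x‖ ^ 2 := by
      rw [← Finset.sum_coe_sort sfin (fun x => ‖h x‖ ^ 2)]
      exact Fintype.sum_equiv (sfin.orderIsoOfFin hcard).toEquiv _ _ (fun k => rfl)
    have e3 : ∑ x ∈ sfin, ‖h x‖ ^ 2
        = ∑ n, ‖h (a n)‖ ^ 2 :=
      Finset.sum_image fun x _ y _ hxy => hinj hxy
    rw [e1, e2, e3]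
  -- define the path
  refine ⟨fun k => if k = 0 then 0 else if k ≤ N then b' (k - 1) else M + 1, by simp, ?_, ?_, ?_⟩
  · simp
  · intro k hk
    dsimp only
    rcases Nat.eq_zero_or_pos k with h0 | hpos
    · subst h0
      simp only [if_pos rfl, Nat.one_ne_zero, if_neg, if_pos hN]
      have : (1:ℕ) ≤ N := hN
      rw [if_neg (by omega : ¬ (1:ℕ) = 0), if_pos this]
      exact Or.inr (Or.inl ⟨rfl, hb'Icc 0 hN⟩)
    · rcases Nat.lt_or_ge k N with hkN | hkN
      · rw [if_neg (by omega : ¬ k = 0), if_pos (by omega : k ≤ N),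
          if_neg (by omega : ¬ k + 1 = 0), if_pos (by omega : k + 1 ≤ N)]
        refine Or.inl ⟨hb'Icc (k - 1) (by omega), hb'Icc (k + 1 - 1) (by omega), ?_⟩
        have := hb'gap (k - 1) (by omega)
        have he : k - 1 + 1 = k + 1 - 1 := by omega
        rw [he] at this
        exact this
      · have hkeq : k = N := by omega
        rw [if_neg (by omega : ¬ k = 0), if_pos (by omega : k ≤ N),
          if_neg (by omega : ¬ k + 1 = 0), if_neg (by omega : ¬ k + 1 ≤ N)]
        exact Or.inr (Or.inr ⟨hb'Icc (k - 1) (by omega), rfl⟩)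
  · dsimp only
    rw [Finset.sum_range_succ']
    have hterm0 : Wtilde h (if (0:ℕ) = 0 then 0 else if (0:ℕ) ≤ N then b' (0 - 1) else M + 1)
        (if (1:ℕ) = 0 then 0 else if 1 ≤ N then b' (1 - 1) else M + 1) = 0 := by
      rw [if_pos rfl, Wtilde, if_pos rfl]
    simp only [hterm0, add_zero]
    have hterm : ∀ k ∈ Finset.range N,
        Wtilde h (if k + 1 = 0 then 0 else if k + 1 ≤ N then b' (k + 1 - 1) else M + 1)
          (if k + 1 + 1 = 0 then 0 else if k + 1 + 1 ≤ N then b' (k + 1 + 1 - 1) else M + 1)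
        = -(‖h (b' k)‖ ^ 2) := by
      intro k hk
      rw [Finset.mem_range] at hk
      rw [if_neg (by omega : ¬ k + 1 = 0), if_pos (by omega : k + 1 ≤ N)]
      have hne : b' (k + 1 - 1) ≠ 0 := by
        have := hb'Icc (k + 1 - 1) (by omega)
        rw [Finset.mem_Icc] at this
        omega
      rw [Wtilde, if_neg hne]
      norm_num
    rw [Finset.sum_congr rfl hterm, hs, ← hsum, ← Finset.sum_neg_distrib]
    simp [Wtilde]


lemma path_to_sel (M N a_min : ℕ) (hN : 0 < N) (ha : 0 < a_min) (h : ℕ → ℂ) (s : ℝ)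
    (hpath : ∃ p : ℕ → ℕ, p 0 = 0 ∧ p (N + 1) = M + 1 ∧
        (∀ k < N + 1, EdgeTilde M a_min (p k) (p (k + 1))) ∧
        -s = ∑ k ∈ Finset.range (N + 1), Wtilde h (p k) (p (k + 1))) :
    ∃ a : Fin N → ℕ, (∀ n, a n ∈ Finset.Icc 1 M) ∧
        (∀ i j, i ≠ j → (a_min : ℤ) ≤ |(a i : ℤ) - (a j : ℤ)|) ∧
        s = ∑ n, ‖h (a n)‖ ^ 2 := by
  obtain ⟨p, hp0, hpN, hE, hs⟩ := hpath
  -- interior vertices lie in [1, M]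
  have hin : ∀ k, 1 ≤ k → k ≤ N → p k ∈ Finset.Icc 1 M := by
    intro k
    induction k with
    | zero => exact fun h0 _ => absurd h0 (by omega)
    | succ k ih =>
      intro _ hk1
      rcases Nat.eq_zero_or_pos k with h0 | hpos
      · subst h0
        rcases hE 0 (by omega) with h1 | h2 | h3
        · rw [hp0] at h1; rw [Finset.mem_Icc] at h1; omega
        · exact h2.2
        · rw [hp0] at h3; rw [Finset.mem_Icc] at h3; omega
      · have hpk := ih hpos (by omega)
        rw [Finset.mem_Icc] at hpk
        rcases hE k (by omega) with h1 | h2 | h3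
        · exact h1.2.1
        · omega
        · -- p (k+1) = M + 1, but there is another edge out of p (k+1)
          exfalso
          rcases hE (k + 1) (by omega) with g1 | g2 | g3
          · rw [h3.2, Finset.mem_Icc] at g1; omega
          · rw [h3.2] at g2; omega
          · rw [h3.2, Finset.mem_Icc] at g3; omega
  -- consecutive gaps
  have hgap1 : ∀ k, 1 ≤ k → k + 1 ≤ N → p k + a_min ≤ p (k + 1) := by
    intro k hk1 hk2
    have h1 := hin k hk1 (by omega)
    have h2 := hin (k + 1) (by omega) hk2
    rw [Finset.mem_Icc] at h1 h2
    rcases hE k (by omega) with g1 | g2 | g3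
    · exact g1.2.2
    · omega
    · omega
  -- chain of gaps
  have hchain : ∀ j i, 1 ≤ i → i < j → j ≤ N → p i + a_min ≤ p j := by
    intro j
    induction j with
    | zero => exact fun i _ hij _ => absurd hij (by omega)
    | succ j ih =>
      intro i hi1 hij hjN
      rcases Nat.lt_or_ge i j with hlt | hge
      · have := ih i hi1 hlt (by omega)
        have := hgap1 j (by omega) hjN
        omega
      · have : i = j := by omega
        subst this
        exact hgap1 i hi1 hjN
  refine ⟨fun n => p (n.val + 1), fun n => hin (n.val + 1) (by omega) (by omega), ?_, ?_⟩
  · intro i j hij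
    rcases Nat.lt_or_ge i.val j.val with hlt | hge
    · have hc := hchain (j.val + 1) (i.val + 1) (by omega) (by omega) (by omega)
      refine le_abs.mpr (Or.inr ?_)
      push_cast
      omega
    · have hlt : j.val < i.val := by
        rcases Nat.lt_or_ge j.val i.val with h' | h'
        · exact h'
        · exact absurd (Fin.ext (by omega)) hij
      have hc := hchain (i.val + 1) (j.val + 1) (by omega) (by omega) (by omega)
      refine le_abs.mpr (Or.inl ?_)
      push_cast
      omega
  · -- value
    have : ∑ k ∈ Finset.range (N + 1), Wtilde h (p k) (p (k + 1))
        = -∑ n : Fin N, ‖h (p (n.val + 1))‖ ^ 2 := by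
      rw [Finset.sum_range_succ', hp0]
      have hterm : ∀ k ∈ Finset.range N,
          Wtilde h (p (k + 1)) (p (k + 1 + 1)) = -(‖h (p (k + 1))‖ ^ 2) := by
        intro k hk
        rw [Finset.mem_range] at hk
        have := hin (k + 1) (by omega) (by omega)
        rw [Finset.mem_Icc] at this
        rw [Wtilde, if_neg (by omega)]
      rw [Finset.sum_congr rfl hterm]
      simp [Wtilde, Fin.sum_univ_eq_sum_range (fun k => ‖h (p (k + 1))‖ ^ 2) N,
        Finset.sum_neg_distrib]
    rw [this] at hs
    linarith

/-- Problem (P1) is equivalent to the fixed-hop shortest path problem (P2):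
the maximum of `∑_{n=1}^{N} |h_{a_n}|²` over all feasible selections
`a_1, …, a_N ∈ {1, …, M}` (pairwise spacing `≥ a_min`) equals the negative of the
minimum total weight over all `(N+1)`-hop paths in `G̃` from vertex `0` to vertex `M+1`. -/
theorem P1_equiv_P2 (M N a_min : ℕ) (hM : 0 < M) (hN : 0 < N) (ha : 0 < a_min)
    (hfeas : (N - 1) * a_min + 1 ≤ M) (h : ℕ → ℂ) (v : ℝ) :
    IsGreatest {s : ℝ | ∃ a : Fin N → ℕ, (∀ n, a n ∈ Finset.Icc 1 M) ∧
        (∀ i j, i ≠ j → (a_min : ℤ) ≤ |(a i : ℤ) - (a j : ℤ)|) ∧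
        s = ∑ n, ‖h (a n)‖ ^ 2} v ↔
    IsLeast {s : ℝ | ∃ p : ℕ → ℕ, p 0 = 0 ∧ p (N + 1) = M + 1 ∧
        (∀ k < N + 1, EdgeTilde M a_min (p k) (p (k + 1))) ∧
        s = ∑ k ∈ Finset.range (N + 1), Wtilde h (p k) (p (k + 1))} (-v) := by
  have key : ∀ s : ℝ, (∃ a : Fin N → ℕ, (∀ n, a n ∈ Finset.Icc 1 M) ∧
      (∀ i j, i ≠ j → (a_min : ℤ) ≤ |(a i : ℤ) - (a j : ℤ)|) ∧
      s = ∑ n, ‖h (a n)‖ ^ 2) ↔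
      (∃ p : ℕ → ℕ, p 0 = 0 ∧ p (N + 1) = M + 1 ∧
      (∀ k < N + 1, EdgeTilde M a_min (p k) (p (k + 1))) ∧
      -s = ∑ k ∈ Finset.range (N + 1), Wtilde h (p k) (p (k + 1))) := by
    intro s
    exact ⟨sel_to_path M N a_min hN ha h s, path_to_sel M N a_min hN ha h s⟩
  constructor
  · rintro ⟨hv, hub⟩
    refine ⟨(key v).mp hv, ?_⟩
    rintro t ht
    have ht' : -t ∈ {s : ℝ | ∃ a : Fin N → ℕ, (∀ n, a n ∈ Finset.Icc 1 M) ∧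
        (∀ i j, i ≠ j → (a_min : ℤ) ≤ |(a i : ℤ) - (a j : ℤ)|) ∧
        s = ∑ n, ‖h (a n)‖ ^ 2} := by
      refine (key (-t)).mpr ?_
      rw [neg_neg]
      exact ht
    have := hub ht'
    linarith
  · rintro ⟨hv, hlb⟩
    refine ⟨(key v).mpr hv, ?_⟩
    rintro t ht
    have ht' : -t ∈ {s : ℝ | ∃ p : ℕ → ℕ, p 0 = 0 ∧ p (N + 1) = M + 1 ∧
        (∀ k < N + 1, EdgeTilde M a_min (p k) (p (k + 1))) ∧
        s = ∑ k ∈ Finset.range (N + 1), Wtilde h (p k) (p (k + 1))} := (key t).mp ht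
    have := hlb ht'
    linarith
end

section
/- Every walk from vertex 0 to vertex M+1 in G̃ consisting of exactly N+1 edges has the form 0 → b_1 → b_2 → … → b_N → M+1, where b_1, …, b_N ∈ {1, …, M} satisfy b_{n+1} − b_n ≥ a_min for all n = 1, …, N−1; in particular, its N interior vertices form a feasible selection satisfying |b_i − b_j| ≥ a_min for all i ≠ j. -/
/-!
A vertex entered by an edge of `G̃` lies in `{1, …, M, M+1}`, and a vertex left by an edge lies
in `{0, …, M}`; so every interior vertex of a walk lies in `{1, …, M}`, and an edge between two
such vertices is a forward jump of length at least `a_min`. Chaining these jumps spaces any two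
interior vertices at least `a_min` apart.
-/

namespace EdgeTilde

variable {M a i j : ℕ}

theorem left_le (h : EdgeTilde M a i j) : i ≤ M := by
  simp only [EdgeTilde, Finset.mem_Icc] at h
  omega

theorem right_mem_Icc_or_eq (h : EdgeTilde M a i j) : j ∈ Finset.Icc 1 M ∨ j = M + 1 := by
  rcases h with ⟨-, hj, -⟩ | ⟨-, hj⟩ | ⟨-, hj⟩
  exacts [.inl hj, .inl hj, .inr hj]

theorem add_le (h : EdgeTilde M a i j) (hi : 1 ≤ i) (hj : j ≤ M) : i + a ≤ j := by
  simp only [EdgeTilde, Finset.mem_Icc] at h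
  omega

end EdgeTilde

theorem add_le_of_forall_add_le_succ {p : ℕ → ℕ} {a lo hi : ℕ}
    (h : ∀ n, lo ≤ n → n + 1 ≤ hi → p n + a ≤ p (n + 1)) {i j : ℕ}
    (hi_lo : lo ≤ i) (hij : i < j) (hj : j ≤ hi) : p i + a ≤ p j := by
  induction j, hij using Nat.le_induction with
  | base => exact h i hi_lo hj
  | succ k hik ih =>
    have := ih (by omega)
    have := h k (by omega) hj
    omega

theorem le_abs_sub_of_forall_add_le_succ {p : ℕ → ℕ} {a lo hi : ℕ}
    (h : ∀ n, lo ≤ n → n + 1 ≤ hi → p n + a ≤ p (n + 1)) {i j : ℕ}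
    (hi_lo : lo ≤ i) (hi_hi : i ≤ hi) (hj_lo : lo ≤ j) (hj_hi : j ≤ hi) (hne : i ≠ j) :
    (a : ℤ) ≤ |(p i : ℤ) - p j| := by
  rcases hne.lt_or_gt with hij | hji
  · have := add_le_of_forall_add_le_succ h hi_lo hij hj_hi
    rw [abs_sub_comm, abs_of_nonneg] <;> omega
  · have := add_le_of_forall_add_le_succ h hj_lo hji hi_hi
    rw [abs_of_nonneg] <;> omega

theorem walk_interior_is_feasible_general (M N a_min : ℕ) (p : ℕ → ℕ)
    (hwalk : ∀ k < N + 1, EdgeTilde M a_min (p k) (p (k + 1))) :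
    (∀ n, 1 ≤ n → n ≤ N → p n ∈ Finset.Icc 1 M) ∧
    (∀ n, 1 ≤ n → n + 1 ≤ N → p n + a_min ≤ p (n + 1)) ∧
    (∀ i j, 1 ≤ i → i ≤ N → 1 ≤ j → j ≤ N → i ≠ j →
      (a_min : ℤ) ≤ |(p i : ℤ) - (p j : ℤ)|) := by
  have hmem : ∀ n, 1 ≤ n → n ≤ N → p n ∈ Finset.Icc 1 M := by
    intro n h1 hN
    have hin := (hwalk (n - 1) (by omega)).right_mem_Icc_or_eq
    rw [Nat.sub_add_cancel h1] at hin
    have hout := (hwalk n (by omega)).left_le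
    exact hin.resolve_right (by omega)
  have hgap : ∀ n, 1 ≤ n → n + 1 ≤ N → p n + a_min ≤ p (n + 1) := fun n h1 hN =>
    (hwalk n (by omega)).add_le (Finset.mem_Icc.mp (hmem n h1 (by omega))).1
      (Finset.mem_Icc.mp (hmem (n + 1) (by omega) hN)).2
  exact ⟨hmem, hgap, fun i j hi1 hiN hj1 hjN hne =>
    le_abs_sub_of_forall_add_le_succ hgap hi1 hiN hj1 hjN hne⟩

/-- Every walk `p 0 → p 1 → … → p (N+1)` in `G̃` from vertex `0` to
vertex `M+1` with exactly `N+1` edges has all its `N` interior vertices in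
`{1, …, M}` with consecutive gaps `≥ a_min`; in particular the interior vertices
form a feasible selection with pairwise spacing `≥ a_min`. -/
theorem walk_interior_is_feasible (M N a_min : ℕ) (hM : 0 < M) (hN : 0 < N)
    (ha : 0 < a_min) (p : ℕ → ℕ) (h0 : p 0 = 0) (hend : p (N + 1) = M + 1)
    (hwalk : ∀ k < N + 1, EdgeTilde M a_min (p k) (p (k + 1))) :
    (∀ n, 1 ≤ n → n ≤ N → p n ∈ Finset.Icc 1 M) ∧
    (∀ n, 1 ≤ n → n + 1 ≤ N → p n + a_min ≤ p (n + 1)) ∧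
    (∀ i j, 1 ≤ i → i ≤ N → 1 ≤ j → j ≤ N → i ≠ j →
      (a_min : ℤ) ≤ |(p i : ℤ) - (p j : ℤ)|) :=
  walk_interior_is_feasible_general M N a_min p hwalk
end
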